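/- Let L, ν be natural numbers with ν+1 < L, h ∈ ℂ^L, f ∈ ℂ^{ν+1}, and N0 > 0; take σ = 1 (so that M̃ = M), and define ε₁ = (1/2π)∫_{−π}^{π} M(ω)·conj(F(ω))·φ(ω) dω and ε₂ = (1/2π)∫_{−π}^{π} (M(ω)·|F(ω)|²/(1+|F(ω)|²))·φ(ω)·φ(ω)† dω. Assume ε₂ is negative definite (hence invertible). Suppose there exist a measurable W : [−π,π] → ℂ and b₀ ∈ ℂ^{L−ν−1} such that, with B₀(ω) = Σ_{j=0}^{L−ν−2} (b₀)_j e^{iω(ν+1+j)}, one has |W(ω)|²·N0 = 1 and W(ω)·H(ω) = F(ω) + B₀(ω) for all ω ∈ [−π,π]. Then ε₁†·ε₂⁻¹·ε₁ − (1/2π)∫_{−π}^{π} M(ω)·(1+|F(ω)|²) dω ≤ 1. -/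

import Mathlib

open Complex Real MeasureTheory Matrix
open scoped ComplexOrder

/-- DTFT of the channel taps `h ∈ ℂ^L`. -/
noncomputable def Hdtft {L : ℕ} (h : Fin L → ℂ) (ω : ℝ) : ℂ :=
  ∑ ℓ : Fin L, h ℓ * Complex.exp (Complex.I * (ω : ℂ) * ((ℓ : ℕ) : ℂ))

/-- DTFT of the target-response taps `f ∈ ℂ^{ν+1}`. -/
noncomputable def Fdtft {ν : ℕ} (f : Fin (ν + 1) → ℂ) (ω : ℝ) : ℂ :=
  ∑ k : Fin (ν + 1), f k * Complex.exp (Complex.I * (ω : ℂ) * ((k : ℕ) : ℂ))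

/-- DTFT of feedback taps `b₀ ∈ ℂ^{L−ν−1}` (supported on taps ν+1,…,L−1). -/
noncomputable def Bdtft {L ν : ℕ} (b : Fin (L - ν - 1) → ℂ) (ω : ℝ) : ℂ :=
  ∑ j : Fin (L - ν - 1), b j * Complex.exp (Complex.I * (ω : ℂ) * ((ν + 1 + (j : ℕ) : ℕ) : ℂ))

/-- The LMMSE kernel `M(ω) = −N0/(N0+|H(ω)|²)`. -/
noncomputable def Mker (N0 : ℝ) (H : ℝ → ℂ) (ω : ℝ) : ℝ :=
  -N0 / (N0 + ‖H ω‖ ^ 2)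

/-- The exponential vector `φ(ω) = (e^{iω(ν+1)},…,e^{iω(L−1)})ᵀ`. -/
noncomputable def phiVec (L ν : ℕ) (j : Fin (L - ν - 1)) (ω : ℝ) : ℂ :=
  Complex.exp (Complex.I * (ω : ℂ) * ((ν + 1 + (j : ℕ) : ℕ) : ℂ))

/-- With σ = 1 (so `M̃ = M`): `ε₁ = (1/2π)∫ M conj(F) φ dω`. -/
noncomputable def eps1 (L ν : ℕ) (N0 : ℝ) (H F : ℝ → ℂ) (j : Fin (L - ν - 1)) : ℂ :=
  ((1 / (2 * π) : ℝ) : ℂ) *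
    ∫ ω in (-π)..π, ((Mker N0 H ω : ℝ) : ℂ) * (starRingEnd ℂ) (F ω) * phiVec L ν j ω

/-- With σ = 1: `ε₂ = (1/2π)∫ (M|F|²/(1+|F|²)) φ φ† dω`. -/
noncomputable def eps2 (L ν : ℕ) (N0 : ℝ) (H F : ℝ → ℂ) :
    Matrix (Fin (L - ν - 1)) (Fin (L - ν - 1)) ℂ := fun j k =>
  ((1 / (2 * π) : ℝ) : ℂ) *
    ∫ ω in (-π)..π,
      ((Mker N0 H ω * ‖F ω‖ ^ 2 / (1 + ‖F ω‖ ^ 2) : ℝ) : ℂ) *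
        (phiVec L ν j ω * (starRingEnd ℂ) (phiVec L ν k ω))


/-!
For `-ε₂` positive definite, completing the square gives
`ε₁† ε₂⁻¹ ε₁ ≤ -2 Re (x† ε₁) - x† ε₂ x` for every `x`, with equality at `x = -ε₂⁻¹ ε₁`.
Taking `x = conj b₀` turns both terms into integrals against `B₀ = ∑ⱼ (b₀)ⱼ φⱼ`, and the whitening
hypothesis `|W|² N0 = 1`, `W H = F + B₀` gives `M = -1 / (1 + |F + B₀|²)`. The resulting integrand
is `1 - |B₀|² / ((1 + |F|²) (1 + |F + B₀|²)) ≤ 1`, so its average over `[-π, π]` is at most `1`.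
-/

open scoped ComplexConjugate

namespace Matrix

variable {n 𝕜 : Type*} [Fintype n] [DecidableEq n] [RCLike 𝕜]

/-- Completing the square: the quadratic form of `A` is nonnegative at `v - A⁻¹ e`. -/
theorem PosDef.two_mul_re_dotProduct_sub_le {A : Matrix n n 𝕜} (hA : A.PosDef) (e v : n → 𝕜) :
    2 * RCLike.re (star v ⬝ᵥ e) - RCLike.re (star v ⬝ᵥ A *ᵥ v) ≤
      RCLike.re (star e ⬝ᵥ A⁻¹ *ᵥ e) := by
  have hunit : IsUnit A.det := hA.det_pos.ne'.isUnit
  have hAinv : A *ᵥ (A⁻¹ *ᵥ e) = e := by rw [mulVec_mulVec, mul_nonsing_inv A hunit, one_mulVec]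
  have hcross : star (A⁻¹ *ᵥ e) ⬝ᵥ A *ᵥ v = star e ⬝ᵥ v := by
    rw [star_mulVec, hA.isHermitian.inv, ← dotProduct_mulVec, mulVec_mulVec,
      nonsing_inv_mul A hunit, one_mulVec]
  have hsym : star (A⁻¹ *ᵥ e) ⬝ᵥ e = star e ⬝ᵥ A⁻¹ *ᵥ e := by
    rw [star_mulVec, hA.isHermitian.inv, ← dotProduct_mulVec]
  have hre : RCLike.re (star e ⬝ᵥ v) = RCLike.re (star v ⬝ᵥ e) := by
    rw [star_dotProduct, RCLike.star_def, RCLike.conj_re]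
  have hsq := hA.posSemidef.re_dotProduct_nonneg (v - A⁻¹ *ᵥ e)
  simp only [mulVec_sub, star_sub, sub_dotProduct, dotProduct_sub, hAinv, hcross, hsym,
    map_sub, hre] at hsq
  linarith

theorem re_dotProduct_inv_mulVec_le_of_posDef_neg {E : Matrix n n 𝕜} (hE : (-E).PosDef)
    (e x : n → 𝕜) :
    RCLike.re (star e ⬝ᵥ E⁻¹ *ᵥ e) ≤
      -2 * RCLike.re (star x ⬝ᵥ e) - RCLike.re (star x ⬝ᵥ E *ᵥ x) := by
  have hinv : E⁻¹ = -(-E)⁻¹ :=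
    inv_eq_left_inv (by rw [neg_mul, ← mul_neg, nonsing_inv_mul _ hE.det_pos.ne'.isUnit])
  have := hE.two_mul_re_dotProduct_sub_le e x
  simp only [hinv, neg_mulVec, dotProduct_neg, map_neg] at this ⊢
  linarith

end Matrix

theorem continuous_sum_mul_cexp_I_mul {ι : Type*} [Fintype ι] (c : ι → ℂ) (k : ι → ℕ) :
    Continuous fun ω : ℝ => ∑ i, c i * Complex.exp (Complex.I * (ω : ℂ) * (k i : ℂ)) := by
  fun_prop

theorem continuous_Hdtft {L : ℕ} (h : Fin L → ℂ) : Continuous (Hdtft h) :=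
  continuous_sum_mul_cexp_I_mul _ _

theorem continuous_Fdtft {ν : ℕ} (f : Fin (ν + 1) → ℂ) : Continuous (Fdtft f) :=
  continuous_sum_mul_cexp_I_mul _ _

theorem continuous_Bdtft {L ν : ℕ} (b : Fin (L - ν - 1) → ℂ) :
    Continuous (Bdtft (L := L) (ν := ν) b) :=
  continuous_sum_mul_cexp_I_mul _ _

theorem continuous_phiVec (L ν : ℕ) (j : Fin (L - ν - 1)) : Continuous (phiVec L ν j) := by
  unfold phiVec; fun_prop

theorem Bdtft_eq_sum_phiVec {L ν : ℕ} (b : Fin (L - ν - 1) → ℂ) (ω : ℝ) :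
    Bdtft (L := L) (ν := ν) b ω = ∑ j, b j * phiVec L ν j ω :=
  rfl

theorem continuous_Mker {N0 : ℝ} (hN0 : 0 < N0) {H : ℝ → ℂ} (hH : Continuous H) :
    Continuous (Mker N0 H) :=
  continuous_const.div (by fun_prop) fun ω => by positivity

theorem Mker_eq_neg_one_div_of_mul_eq {N0 : ℝ} (hN0 : 0 < N0) {H : ℝ → ℂ} {ω : ℝ} {W G : ℂ}
    (hW : ‖W‖ ^ 2 * N0 = 1) (hWH : W * H ω = G) :
    Mker N0 H ω = -1 / (1 + ‖G‖ ^ 2) := by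
  have hH : ‖H ω‖ ^ 2 = N0 * ‖G‖ ^ 2 := by
    rw [← hWH, norm_mul, mul_pow, ← mul_assoc, mul_comm N0, hW, one_mul]
  rw [Mker, hH, div_eq_div_iff (by positivity) (by positivity)]
  ring

theorem sum_mul_intervalIntegral {ι : Type*} (s : Finset ι) (c : ι → ℂ) {g : ι → ℝ → ℂ}
    {a b : ℝ} (hg : ∀ i ∈ s, IntervalIntegrable (g i) volume a b) :
    ∑ i ∈ s, c i * ∫ x in a..b, g i x = ∫ x in a..b, ∑ i ∈ s, c i * g i x := by
  rw [intervalIntegral.integral_finsetSum fun i hi => (hg i hi).const_mul (c i)]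
  simp only [intervalIntegral.integral_const_mul]

theorem average_le_one_of_le_one {g : ℝ → ℝ} (hg : IntervalIntegrable g volume (-π) π)
    (hle : ∀ ω ∈ Set.Icc (-π) π, g ω ≤ 1) :
    (1 / (2 * π)) * ∫ ω in (-π)..π, g ω ≤ 1 := by
  have := intervalIntegral.integral_mono_on (by linarith [pi_pos]) hg intervalIntegrable_const hle
  rw [intervalIntegral.integral_const, smul_eq_mul, mul_one] at this
  rw [div_mul_eq_mul_div, one_mul, div_le_one (by positivity)]
  linarith

section

variable {L ν : ℕ} {N0 : ℝ} {H F : ℝ → ℂ}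

theorem dotProduct_eps1 (hN0 : 0 < N0) (hH : Continuous H) (hF : Continuous F)
    (b : Fin (L - ν - 1) → ℂ) :
    b ⬝ᵥ eps1 L ν N0 H F = ((1 / (2 * π) : ℝ) : ℂ) *
      ∫ ω in (-π)..π, (Mker N0 H ω : ℂ) * conj (F ω) * Bdtft (L := L) (ν := ν) b ω := by
  have hM := continuous_Mker hN0 hH
  have hφ := continuous_phiVec L ν
  simp only [dotProduct, eps1, mul_left_comm (b _), ← Finset.mul_sum]
  rw [sum_mul_intervalIntegral _ _ fun j _ => Continuous.intervalIntegrable (by fun_prop) _ _]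
  simp only [Bdtft_eq_sum_phiVec, Finset.mul_sum, mul_left_comm (b _)]

theorem re_dotProduct_eps1 (hN0 : 0 < N0) (hH : Continuous H) (hF : Continuous F)
    (b : Fin (L - ν - 1) → ℂ) :
    (b ⬝ᵥ eps1 L ν N0 H F).re = (1 / (2 * π)) *
      ∫ ω in (-π)..π, Mker N0 H ω * (conj (F ω) * Bdtft (L := L) (ν := ν) b ω).re := by
  have hM := continuous_Mker hN0 hH
  have hB := continuous_Bdtft (L := L) (ν := ν) b
  have hre := intervalIntegral.intervalIntegral_re (μ := volume) (a := -π) (b := π)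
    (f := fun ω => (Mker N0 H ω : ℂ) * (conj (F ω) * Bdtft (L := L) (ν := ν) b ω))
    (Continuous.intervalIntegrable (by fun_prop) _ _)
  simp only [RCLike.re_to_complex, re_ofReal_mul] at hre
  simp only [dotProduct_eps1 hN0 hH hF, re_ofReal_mul, mul_assoc, hre]

theorem eps2_mulVec_star (hN0 : 0 < N0) (hH : Continuous H) (hF : Continuous F)
    (b : Fin (L - ν - 1) → ℂ) (j : Fin (L - ν - 1)) :
    (eps2 L ν N0 H F *ᵥ star b) j = ((1 / (2 * π) : ℝ) : ℂ) *
      ∫ ω in (-π)..π, ((Mker N0 H ω * ‖F ω‖ ^ 2 / (1 + ‖F ω‖ ^ 2) : ℝ) : ℂ) *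
        phiVec L ν j ω * conj (Bdtft (L := L) (ν := ν) b ω) := by
  have hM := continuous_Mker hN0 hH
  have hφ := continuous_phiVec L ν
  have hden : ∀ ω, 1 + ‖F ω‖ ^ 2 ≠ 0 := fun ω => by positivity
  simp only [mulVec, dotProduct, eps2, mul_assoc, mul_comm _ (star b _),
    mul_left_comm (star b _), ← Finset.mul_sum]
  rw [sum_mul_intervalIntegral _ _ fun k _ => Continuous.intervalIntegrable (by fun_prop) _ _]
  simp only [Bdtft_eq_sum_phiVec, map_sum, map_mul, Finset.mul_sum, Pi.star_apply,
    RCLike.star_def]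
  congr 1
  refine intervalIntegral.integral_congr fun ω _ => Finset.sum_congr rfl fun k _ => ?_
  ring

theorem dotProduct_eps2_mulVec_star (hN0 : 0 < N0) (hH : Continuous H) (hF : Continuous F)
    (b : Fin (L - ν - 1) → ℂ) :
    b ⬝ᵥ eps2 L ν N0 H F *ᵥ star b = ((1 / (2 * π) * ∫ ω in (-π)..π,
      Mker N0 H ω * ‖F ω‖ ^ 2 / (1 + ‖F ω‖ ^ 2) * ‖Bdtft (L := L) (ν := ν) b ω‖ ^ 2 : ℝ) : ℂ) := by
  have hM := continuous_Mker hN0 hH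
  have hφ := continuous_phiVec L ν
  have hB := continuous_Bdtft (L := L) (ν := ν) b
  have hden : ∀ ω, 1 + ‖F ω‖ ^ 2 ≠ 0 := fun ω => by positivity
  simp only [dotProduct, eps2_mulVec_star hN0 hH hF, mul_left_comm (b _), ← Finset.mul_sum]
  rw [sum_mul_intervalIntegral _ _ fun j _ => Continuous.intervalIntegrable (by fun_prop) _ _,
    ofReal_mul, ← intervalIntegral.integral_ofReal]
  congr 1
  refine intervalIntegral.integral_congr fun ω _ => ?_
  have hnorm : ((‖Bdtft (L := L) (ν := ν) b ω‖ ^ 2 : ℝ) : ℂ) =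
      ∑ j, b j * phiVec L ν j ω * conj (Bdtft (L := L) (ν := ν) b ω) := by
    rw [← Finset.sum_mul, ← Bdtft_eq_sum_phiVec, mul_conj', ofReal_pow]
  rw [ofReal_mul, hnorm, Finset.mul_sum]
  exact Finset.sum_congr rfl fun j _ => by ring

end

/-- One minus the left-hand side equals `‖B‖² / ((1 + ‖F‖²) (1 + ‖F + B‖²))`. -/
theorem neg_two_mul_re_sub_sub_le_one (F B : ℂ) {M : ℝ} (hM : M = -1 / (1 + ‖F + B‖ ^ 2)) :
    -2 * (M * (conj F * B).re) - M * ‖F‖ ^ 2 / (1 + ‖F‖ ^ 2) * ‖B‖ ^ 2 -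
      M * (1 + ‖F‖ ^ 2) ≤ 1 := by
  have hsq : ‖F + B‖ ^ 2 = ‖F‖ ^ 2 + ‖B‖ ^ 2 + 2 * (conj F * B).re := by
    rw [norm_add_sq (𝕜 := ℂ), RCLike.inner_apply', RCLike.re_to_complex]
    ring
  have hF : 0 < 1 + ‖F‖ ^ 2 := by positivity
  have hFB : 0 < 1 + ‖F + B‖ ^ 2 := by positivity
  have hgap : 1 - (-2 * (M * (conj F * B).re) - M * ‖F‖ ^ 2 / (1 + ‖F‖ ^ 2) * ‖B‖ ^ 2 -
      M * (1 + ‖F‖ ^ 2)) = ‖B‖ ^ 2 / ((1 + ‖F‖ ^ 2) * (1 + ‖F + B‖ ^ 2)) := by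
    rw [hM]
    field_simp
    rw [hsq, mul_comm B]
    ring
  linarith [div_nonneg (sq_nonneg ‖B‖) (mul_pos hF hFB).le]

theorem stmt14_general (L ν : ℕ) (h : Fin L → ℂ) (f : Fin (ν + 1) → ℂ)
    (N0 : ℝ) (hN0 : 0 < N0)
    (hNegDef : (-(eps2 L ν N0 (Hdtft h) (Fdtft f))).PosDef)
    (hexists : ∃ (W : ℝ → ℂ) (b₀ : Fin (L - ν - 1) → ℂ), Measurable W ∧
      ∀ ω ∈ Set.Icc (-π) π,
        ‖W ω‖ ^ 2 * N0 = 1 ∧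
        W ω * Hdtft h ω = Fdtft f ω + Bdtft (L := L) (ν := ν) b₀ ω) :
    (star (eps1 L ν N0 (Hdtft h) (Fdtft f)) ⬝ᵥ
        (eps2 L ν N0 (Hdtft h) (Fdtft f))⁻¹.mulVec (eps1 L ν N0 (Hdtft h) (Fdtft f))).re -
      (1 / (2 * π)) *
        ∫ ω in (-π)..π, Mker N0 (Hdtft h) ω * (1 + ‖Fdtft f ω‖ ^ 2) ≤ 1 := by
  obtain ⟨W, b₀, -, hW⟩ := hexists
  have hH := continuous_Hdtft h
  have hF := continuous_Fdtft f
  have hB := continuous_Bdtft (L := L) (ν := ν) b₀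
  have hM := continuous_Mker hN0 hH
  have hden : ∀ ω, 1 + ‖Fdtft f ω‖ ^ 2 ≠ 0 := fun ω => by positivity
  have hbound := re_dotProduct_inv_mulVec_le_of_posDef_neg hNegDef
    (eps1 L ν N0 (Hdtft h) (Fdtft f)) (star b₀)
  simp only [RCLike.re_to_complex, star_star, re_dotProduct_eps1 hN0 hH hF,
    dotProduct_eps2_mulVec_star hN0 hH hF, ofReal_re] at hbound
  have hpt : ∀ ω ∈ Set.Icc (-π) π,
      -2 * (Mker N0 (Hdtft h) ω * (conj (Fdtft f ω) * Bdtft (L := L) (ν := ν) b₀ ω).re) -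
        Mker N0 (Hdtft h) ω * ‖Fdtft f ω‖ ^ 2 / (1 + ‖Fdtft f ω‖ ^ 2) *
          ‖Bdtft (L := L) (ν := ν) b₀ ω‖ ^ 2 -
        Mker N0 (Hdtft h) ω * (1 + ‖Fdtft f ω‖ ^ 2) ≤ 1 := fun ω hω =>
    neg_two_mul_re_sub_sub_le_one _ _ (Mker_eq_neg_one_div_of_mul_eq hN0 (hW ω hω).1 (hW ω hω).2)
  have havg := average_le_one_of_le_one (Continuous.intervalIntegrable (by fun_prop) _ _) hpt
  rw [intervalIntegral.integral_sub, intervalIntegral.integral_sub,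
    intervalIntegral.integral_const_mul] at havg
  · linarith
  all_goals exact Continuous.intervalIntegrable (by fun_prop) _ _

/-- Corollary 1 of the paper: if `F` arises as the ν-tap truncation of a whitened
(minimum-phase equivalent) channel, then `ε₁†ε₂⁻¹ε₁ − (1/2π)∫M(1+|F|²) ≤ 1`. -/
theorem stmt14 (L ν : ℕ) (hLν : ν + 1 < L) (h : Fin L → ℂ) (f : Fin (ν + 1) → ℂ)
    (N0 : ℝ) (hN0 : 0 < N0)
    (hNegDef : (-(eps2 L ν N0 (Hdtft h) (Fdtft f))).PosDef)
    (hexists : ∃ (W : ℝ → ℂ) (b₀ : Fin (L - ν - 1) → ℂ), Measurable W ∧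
      ∀ ω ∈ Set.Icc (-π) π,
        ‖W ω‖ ^ 2 * N0 = 1 ∧
        W ω * Hdtft h ω = Fdtft f ω + Bdtft (L := L) (ν := ν) b₀ ω) :
    (star (eps1 L ν N0 (Hdtft h) (Fdtft f)) ⬝ᵥ
        (eps2 L ν N0 (Hdtft h) (Fdtft f))⁻¹.mulVec (eps1 L ν N0 (Hdtft h) (Fdtft f))).re -
      (1 / (2 * π)) *
        ∫ ω in (-π)..π, Mker N0 (Hdtft h) ω * (1 + ‖Fdtft f ω‖ ^ 2) ≤ 1 :=
  stmt14_general L ν h f N0 hN0 hNegDef hexists
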